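/- A 2-connected but not 3-connected graph with at least 5 vertices is not 3-rigid: if G has a vertex cut of size 2, then some generic framework (G,p) in ℝ³ has a nontrivial infinitesimal flex. -/

import Mathlib

/-- A point of ℝ³. -/
abbrev Pt : Type := Fin 3 → ℝ

/-- `u` is an infinitesimal flex of the bar-joint framework `(G, p)` in ℝ³. -/
def IsFlex {V : Type*} (G : SimpleGraph V) (p u : V → Pt) : Prop :=
  ∀ v w : V, G.Adj v w → (∑ i, (u v i - u w i) * (p v i - p w i)) = 0

/-- `u` is a trivial infinitesimal flex of the placement `p`: a combination of an
infinitesimal rotation (skew-symmetric matrix) and an infinitesimal translation. -/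
def IsTrivialFlex {V : Type*} (p u : V → Pt) : Prop :=
  ∃ S : Matrix (Fin 3) (Fin 3) ℝ, ∃ t : Pt,
    S.transpose = -S ∧ ∀ v : V, u v = S.mulVec (p v) + t

/-- The framework `(G, p)` is infinitesimally rigid. -/
def InfRigid {V : Type*} (G : SimpleGraph V) (p : V → Pt) : Prop :=
  ∀ u : V → Pt, IsFlex G p u → IsTrivialFlex p u

/-- The placement `p` is generic: the coordinates of the joints form an
algebraically independent set over ℚ. -/
def Generic {V : Type*} (p : V → Pt) : Prop :=
  AlgebraicIndependent ℚ (fun vi : V × Fin 3 => p vi.1 vi.2)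

/-- The graph `G` is 3-rigid: every generic placement in ℝ³ is infinitesimally rigid. -/
def ThreeRigid {V : Type*} (G : SimpleGraph V) : Prop :=
  ∀ p : V → Pt, Generic p → InfRigid G p

/-- The graph `G` is minimally 3-rigid. -/
def MinThreeRigid {V : Type*} (G : SimpleGraph V) : Prop :=
  ThreeRigid G ∧ ∀ e ∈ G.edgeSet, ¬ ThreeRigid (G.deleteEdges {e})


noncomputable section

/-- cross product -/
def cr (u v : Pt) : Pt :=
  ![u 1 * v 2 - u 2 * v 1, u 2 * v 0 - u 0 * v 2, u 0 * v 1 - u 1 * v 0]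

lemma cr_apply0 (u v : Pt) : cr u v 0 = u 1 * v 2 - u 2 * v 1 := rfl
lemma cr_apply1 (u v : Pt) : cr u v 1 = u 2 * v 0 - u 0 * v 2 := rfl
lemma cr_apply2 (u v : Pt) : cr u v 2 = u 0 * v 1 - u 1 * v 0 := rfl

lemma exists_generic (V : Type*) [Fintype V] : ∃ p : V → Pt, Generic p := by
  have hnotalg : ¬ Algebra.IsAlgebraic ℚ ℝ := by
    intro h
    have hcnt : Set.Countable {x : ℝ | IsAlgebraic ℚ x} := Algebraic.countable ℚ ℝ
    have : Set.Countable (Set.univ : Set ℝ) := by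
      have : {x : ℝ | IsAlgebraic ℚ x} = Set.univ := by
        ext x; simp [h.isAlgebraic x]
      rwa [this] at hcnt
    exact Cardinal.not_countable_real (by simpa using this)
  haveI htr : Algebra.Transcendental ℚ ℝ :=
    (Algebra.transcendental_iff_not_isAlgebraic).2 hnotalg
  obtain ⟨ι, x, hx⟩ := exists_isTranscendenceBasis' ℚ ℝ
  haveI : Nonempty ι := hx.nonempty_iff_transcendental.2 htr
  have hcard := hx.lift_cardinalMk_eq_max_lift
  simp only [Cardinal.lift_id] at hcard
  have hι : Cardinal.aleph0 ≤ Cardinal.mk ι := by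
    by_contra hlt
    push_neg at hlt
    have h1 : Cardinal.mk ℝ ≤ Cardinal.aleph0 := by
      rw [hcard]
      simp only [sup_le_iff]
      exact ⟨⟨by simp [Cardinal.mk_le_aleph0], hlt.le⟩, le_rfl⟩
    exact Cardinal.not_countable_real
      (by haveI := Cardinal.mk_le_aleph0_iff.mp h1; exact Set.countable_univ)
  haveI : Infinite ι := Cardinal.infinite_iff.2 hι
  obtain ⟨g, hg⟩ := countable_iff_exists_injective (V × Fin 3) |>.1 inferInstance
  set f : V × Fin 3 → ι := fun vi => (Infinite.natEmbedding ι) (g vi) with hf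
  have hfinj : Function.Injective f := (Infinite.natEmbedding ι).injective.comp hg
  refine ⟨fun v i => x (f (v, i)), ?_⟩
  exact hx.1.comp f hfinj

/-- any cross-product-ish polynomial nonvanishing from genericity -/
lemma generic_cr_ne {V : Type*} [DecidableEq V] {p : V → Pt} (hp : Generic p) {a b c : V}
    (hab : a ≠ b) (hac : a ≠ c) (hbc : b ≠ c) :
    cr (p b - p a) (p c - p a) ≠ 0 := by
  intro h0
  have h2 : (p b 0 - p a 0) * (p c 1 - p a 1) - (p b 1 - p a 1) * (p c 0 - p a 0) = 0 := by
    have := congrFun h0 2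
    simpa [cr_apply2] using this
  set P : MvPolynomial (V × Fin 3) ℚ :=
    (MvPolynomial.X (b, 0) - MvPolynomial.X (a, 0)) * (MvPolynomial.X (c, 1) - MvPolynomial.X (a, 1))
      - (MvPolynomial.X (b, 1) - MvPolynomial.X (a, 1)) * (MvPolynomial.X (c, 0) - MvPolynomial.X (a, 0)) with hP
  have haev : MvPolynomial.aeval (fun vi : V × Fin 3 => p vi.1 vi.2) P = 0 := by
    simp only [hP, map_sub, map_mul, MvPolynomial.aeval_X]
    simpa using h2
  have hPz : P = 0 := hp (by simpa using haev)
  have := congrArg (MvPolynomial.eval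
    (fun vi : V × Fin 3 => if vi.1 = b ∧ vi.2 = 0 then (1 : ℚ) else if vi.1 = c ∧ vi.2 = 1 then 1 else 0)) hPz
  simp only [hP, map_sub, map_mul, MvPolynomial.eval_X, map_zero] at this
  norm_num [hab, hac, hbc, hab.symm, hac.symm, hbc.symm, Fin.ext_iff] at this

lemma generic_ne {V : Type*} {p : V → Pt} (hp : Generic p) {a b : V} (hab : a ≠ b) (i : Fin 3) :
    p a i ≠ p b i := by
  intro he
  have hinj : Function.Injective (fun vi : V × Fin 3 => p vi.1 vi.2) := hp.injective
  have := hinj (show (fun vi : V × Fin 3 => p vi.1 vi.2) (a, i) = (fun vi : V × Fin 3 => p vi.1 vi.2) (b, i) from he)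
  exact hab (by simpa [Prod.ext_iff] using this)

/-- skew matrices act as cross product -/
lemma skew_mulVec (S : Matrix (Fin 3) (Fin 3) ℝ) (hS : S.transpose = -S) (z : Pt) :
    S.mulVec z = cr ![S 2 1, S 0 2, S 1 0] z := by
  have h : ∀ i j, S j i = -(S i j) := fun i j => by
    have := congrFun (congrFun hS i) j
    simpa [Matrix.transpose_apply] using this
  have h00 := h 0 0; have h11 := h 1 1; have h22 := h 2 2
  have h01 := h 0 1; have h02 := h 0 2; have h12 := h 1 2
  funext i
  fin_cases i
  · simp [Matrix.mulVec, dotProduct, Fin.sum_univ_three, cr]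
    linear_combination z 0 / 2 * h00 + z 1 * h01
  · simp [Matrix.mulVec, dotProduct, Fin.sum_univ_three, cr]
    linear_combination z 1 / 2 * h11 + z 2 * h12
  · simp [Matrix.mulVec, dotProduct, Fin.sum_univ_three, cr]
    linear_combination z 2 / 2 * h22 + z 0 * h02

lemma cr_sub_right (u v w : Pt) : cr u (v - w) = cr u v - cr u w := by
  funext i; fin_cases i <;> simp [cr] <;> ring

lemma cr_smul_left (μ : ℝ) (u v : Pt) : cr (μ • u) v = μ • cr u v := by
  funext i; fin_cases i <;> simp [cr] <;> ring

lemma cr_parallel {e d : Pt} (hd : d 0 ≠ 0) (h : cr e d = 0) : ∃ μ : ℝ, e = μ • d := by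
  refine ⟨e 0 / d 0, ?_⟩
  have h1 := congrFun h 1
  have h2 := congrFun h 2
  simp [cr, sub_eq_zero] at h1 h2
  funext i
  fin_cases i
  · simp [Pi.smul_apply]; field_simp
  · simp [Pi.smul_apply]; field_simp; linarith [h2]
  · simp [Pi.smul_apply]; field_simp; linarith [h1]

/-- a graph on at least 5 vertices with a vertex cut of size 2 is
not 3-rigid: some generic framework in ℝ³ has a nontrivial infinitesimal flex. -/
theorem two_cut_not_rigid {V : Type*} [Fintype V] [DecidableEq V]
    (G : SimpleGraph V) (h5 : 5 ≤ Fintype.card V)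
    (a b : V) (hab : a ≠ b)
    (hcut : ¬ (G.induce ({a, b}ᶜ : Set V)).Connected) :
    ∃ p : V → Pt, Generic p ∧
      ∃ u : V → Pt, IsFlex G p u ∧ ¬ IsTrivialFlex p u := by
  classical
  obtain ⟨p, hp⟩ := exists_generic V
  set S : Set V := ({a, b}ᶜ : Set V) with hSdef
  -- S is nonempty
  have hSne : Nonempty S := by
    by_contra hne
    have hsub : (Finset.univ : Finset V) ⊆ {a, b} := by
      intro v _
      by_contra hv
      exact hne ⟨⟨v, by simpa [hSdef, Set.mem_compl_iff] using
        (by simpa using hv : ¬ (v = a ∨ v = b))⟩⟩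
    have := Finset.card_le_card hsub
    have h2 : ({a, b} : Finset V).card ≤ 2 := Finset.card_insert_le _ _ |>.trans (by simp)
    simp [Finset.card_univ] at this
    omega
  rw [SimpleGraph.connected_iff] at hcut
  have hpre : ¬ (G.induce S).Preconnected := fun h => hcut ⟨h, hSne⟩
  unfold SimpleGraph.Preconnected at hpre
  push_neg at hpre
  obtain ⟨x, y, hxy⟩ := hpre
  -- the component of x
  set C : Set V := {v : V | ∃ h : v ∈ S, (G.induce S).Reachable x ⟨v, h⟩} with hC
  have hxC : (x : V) ∈ C := ⟨x.2, by exact SimpleGraph.Reachable.refl _⟩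
  have hyC : (y : V) ∉ C := by
    rintro ⟨h, hr⟩
    exact hxy (by convert hr)
  have haS : a ∉ S := by simp [hSdef]
  have hbS : b ∉ S := by simp [hSdef]
  have haC : a ∉ C := fun ⟨h, _⟩ => haS h
  have hbC : b ∉ C := fun ⟨h, _⟩ => hbS h
  have hCmem : ∀ v, v ∈ C → v ∈ S := fun v hv => hv.1
  -- adjacency closure of C
  have hCadj : ∀ v w, v ∈ C → G.Adj v w → w ∈ S → w ∈ C := by
    rintro v w ⟨hvS, hr⟩ hadj hwS
    refine ⟨hwS, hr.trans (SimpleGraph.Adj.reachable ?_)⟩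
    exact hadj
  have hnotS : ∀ v : V, v ∉ S → v = a ∨ v = b := by
    intro v hv
    by_contra hor
    push_neg at hor
    exact hv (by simp [hSdef, Set.mem_compl_iff, hor.1, hor.2])
  set d : Pt := p b - p a with hd
  set u : V → Pt := fun v => if v ∈ C then cr d (p v - p a) else 0 with hu
  refine ⟨p, hp, u, ?_, ?_⟩
  · -- IsFlex
    intro v w hadj
    by_cases hv : v ∈ C <;> by_cases hw : w ∈ C
    · simp only [hu, if_pos hv, if_pos hw]
      simp [cr, Fin.sum_univ_three, hd]; ring
    · -- w ∉ C: w = a or w = b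
      have hwS : w ∉ S := fun hwS => hw (hCadj v w hv hadj.symm.symm hwS)
      rcases hnotS w hwS with rfl | rfl
      · simp only [hu, if_pos hv, if_neg hw]
        simp [cr, Fin.sum_univ_three, hd]; ring
      · simp only [hu, if_pos hv, if_neg hw]
        simp [cr, Fin.sum_univ_three, hd]; ring
    · have hvS : v ∉ S := fun hvS => hv (hCadj w v hw hadj.symm hvS)
      rcases hnotS v hvS with rfl | rfl
      · simp only [hu, if_pos hw, if_neg hv]
        simp [cr, Fin.sum_univ_three, hd]; ring
      · simp only [hu, if_pos hw, if_neg hv]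
        simp [cr, Fin.sum_univ_three, hd]; ring
    · simp [hu, if_neg hv, if_neg hw]
  · -- not trivial
    rintro ⟨M, t, hMt, hMu⟩
    set e : Pt := ![M 2 1, M 0 2, M 1 0] with he
    have hmv : ∀ z : Pt, M.mulVec z = cr e z := fun z => skew_mulVec M hMt z
    have hua : (0 : Pt) = cr e (p a) + t := by
      have := hMu a; rw [hmv] at this; simpa [hu, if_neg haC] using this
    have hub : (0 : Pt) = cr e (p b) + t := by
      have := hMu b; rw [hmv] at this; simpa [hu, if_neg hbC] using this
    have huy : (0 : Pt) = cr e (p y) + t := by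
      have := hMu y; rw [hmv] at this; simpa [hu, if_neg hyC] using this
    have hux : cr d (p x - p a) = cr e (p x) + t := by
      have := hMu x; rw [hmv] at this; simpa [hu, if_pos hxC] using this
    -- distinctness
    have hxa : (x : V) ≠ a := fun h => haS (h ▸ x.2)
    have hxb : (x : V) ≠ b := fun h => hbS (h ▸ x.2)
    have hya : (y : V) ≠ a := fun h => haS (h ▸ y.2)
    have hyb : (y : V) ≠ b := fun h => hbS (h ▸ y.2)
    have hed : cr e d = 0 := by
      have h2 : cr e (p b) + t = cr e (p a) + t := by rw [← hub, ← hua]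
      have h3 : cr e (p b) = cr e (p a) := by
        have := congrArg (fun z => z - t) h2
        simpa [add_sub_cancel_right] using this
      rw [hd, cr_sub_right, h3, sub_self]
    have hey : cr e (p y - p a) = 0 := by
      have h2 : cr e (p y) + t = cr e (p a) + t := by rw [← huy, ← hua]
      have h3 : cr e (p y) = cr e (p a) := by
        have := congrArg (fun z => z - t) h2
        simpa [add_sub_cancel_right] using this
      rw [cr_sub_right, h3, sub_self]
    have hex : cr e (p x - p a) = cr d (p x - p a) := by
      rw [cr_sub_right]
      have h2 : cr e (p x) + t - (cr e (p a) + t) = cr d (p x - p a) - 0 := by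
        rw [← hux, ← hua]
      calc cr e (p x) - cr e (p a) = cr e (p x) + t - (cr e (p a) + t) := by abel
        _ = cr d (p x - p a) - 0 := h2
        _ = cr d (p x - p a) := by rw [sub_zero]
    have hd0 : d 0 ≠ 0 := sub_ne_zero.2 (generic_ne hp (Ne.symm hab) 0)
    obtain ⟨μ, hμ⟩ := cr_parallel hd0 hed
    have hcry : cr d (p y - p a) ≠ 0 := generic_cr_ne hp hab hya.symm hyb.symm
    have hμ0 : μ = 0 := by
      rw [hμ, cr_smul_left] at hey
      rcases smul_eq_zero.1 hey with h | h
      · exact h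
      · exact absurd h hcry
    have he0 : e = 0 := by rw [hμ, hμ0, zero_smul]
    have hcrx : cr d (p x - p a) ≠ 0 := generic_cr_ne hp hab hxa.symm hxb.symm
    apply hcrx
    rw [← hex, he0]
    funext i; fin_cases i <;> simp [cr]

end
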